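/- arXiv:2101.12282 — 3 statements merged into one kernel-verified Lean document; each statement's English description precedes it below -/
import Mathlib

section
/- Let I be a nonempty finite set of natural numbers, let f̂ : ℕ → ℝ, let f ∈ ℝ, let c₀ > 0 and β > 0, and let V, V̂ : ℕ → ℝ be such that V is nonnegative and nondecreasing on I and V̂(J) ≤ β·V(J) for every J ∈ I. Define the Lepski acceptance set A = { J ∈ I : for all J' ∈ I with J' ≥ J, |f̂(J) − f̂(J')| ≤ c₀·(V̂(J) + V̂(J')) }. If J₀ ∈ A and Ĵ is the minimum element of A, then |f̂(Ĵ) − f| ≤ 2·c₀·β·V(J₀) + |f̂(J₀) − f|. -/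
/-- Deterministic core of Lepski's method: if the oracle index `J₀` is accepted and the
data-driven index `Ĵ` is the minimum of the acceptance set, the adaptive error is bounded by
the oracle error plus a multiple of the variance proxy at the oracle index. -/
theorem lepski_oracle_bound
    (I : Finset ℕ) (hI : I.Nonempty)
    (fhat : ℕ → ℝ) (f : ℝ) (c₀ β : ℝ) (hc₀ : 0 < c₀) (hβ : 0 < β)
    (V Vhat : ℕ → ℝ)
    (hVnonneg : ∀ J ∈ I, 0 ≤ V J)
    (hVmono : ∀ J ∈ I, ∀ J' ∈ I, J ≤ J' → V J ≤ V J')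
    (hVhat : ∀ J ∈ I, Vhat J ≤ β * V J)
    (A : Set ℕ)
    (hA : A = {J | J ∈ I ∧ ∀ J' ∈ I, J ≤ J' → |fhat J - fhat J'| ≤ c₀ * (Vhat J + Vhat J')})
    (J₀ Jhat : ℕ) (hJ₀ : J₀ ∈ A) (hJhat : IsLeast A Jhat) :
    |fhat Jhat - f| ≤ 2 * c₀ * β * V J₀ + |fhat J₀ - f| := by
  subst hA
  obtain ⟨⟨hJhI, hJhacc⟩, hmin⟩ := hJhat
  have hle : Jhat ≤ J₀ := hmin hJ₀
  obtain ⟨hJ₀I, -⟩ := hJ₀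
  have h1 : |fhat Jhat - fhat J₀| ≤ c₀ * (Vhat Jhat + Vhat J₀) := hJhacc J₀ hJ₀I hle
  have h2 : Vhat Jhat ≤ β * V J₀ :=
    (hVhat Jhat hJhI).trans (by
      have := hVmono Jhat hJhI J₀ hJ₀I hle
      nlinarith)
  have h3 : Vhat J₀ ≤ β * V J₀ := hVhat J₀ hJ₀I
  have key : |fhat Jhat - fhat J₀| ≤ 2 * c₀ * β * V J₀ := by nlinarith
  calc |fhat Jhat - f| ≤ |fhat Jhat - fhat J₀| + |fhat J₀ - f| := by
        simpa using abs_sub_le (fhat Jhat) (fhat J₀) f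
    _ ≤ 2 * c₀ * β * V J₀ + |fhat J₀ - f| := by linarith
end

section
/- Let d, p, ζ, L > 0 with p ≤ ζ + d/4, and let a : ℕ → ℝ satisfy ∑_{j=1}^{N} (a j)² · j^{2p/d} ≤ L for every N ≥ 1. Then for every natural number J ≥ 1, ∑_{j=1}^{J} (a j)² · j^{2ζ/d} ≤ L · J^{2(ζ−p)/d + 1/2}. -/
/-- Irregular mildly ill-posed case: weighted partial-sum bound
`∑_{j≤J} a_j² j^{2ζ/d} ≤ L · J^{2(ζ−p)/d + 1/2}` under the Sobolev ellipsoid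
constraint `∑_{j≤N} a_j² j^{2p/d} ≤ L` and `p ≤ ζ + d/4`. -/
theorem weighted_partial_sum_bound_mildly_illposed
    (d p ζ L : ℝ) (hd : 0 < d) (hp : 0 < p) (hζ : 0 < ζ) (hL : 0 < L)
    (hpζ : p ≤ ζ + d / 4) (a : ℕ → ℝ)
    (ha : ∀ N : ℕ, 1 ≤ N → ∑ j ∈ Finset.Icc 1 N, (a j) ^ 2 * (j : ℝ) ^ (2 * p / d) ≤ L) :
    ∀ J : ℕ, 1 ≤ J →
      ∑ j ∈ Finset.Icc 1 J, (a j) ^ 2 * (j : ℝ) ^ (2 * ζ / d) ≤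
        L * (J : ℝ) ^ (2 * (ζ - p) / d + 1 / 2) := by
  intro J hJ
  have hJ1 : (1 : ℝ) ≤ (J : ℝ) := by exact_mod_cast hJ
  have hJ0 : (0 : ℝ) < (J : ℝ) := lt_of_lt_of_le one_pos hJ1
  rcases le_or_gt p ζ with hle | hlt
  · -- ζ ≥ p case
    have hexp : 0 ≤ 2 * (ζ - p) / d := div_nonneg (by linarith) hd.le
    have step : ∑ j ∈ Finset.Icc 1 J, (a j) ^ 2 * (j : ℝ) ^ (2 * ζ / d) ≤
        (J : ℝ) ^ (2 * (ζ - p) / d) *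
          ∑ j ∈ Finset.Icc 1 J, (a j) ^ 2 * (j : ℝ) ^ (2 * p / d) := by
      rw [Finset.mul_sum]
      apply Finset.sum_le_sum
      intro j hj
      have hj1 : 1 ≤ j := (Finset.mem_Icc.mp hj).1
      have hjJ : j ≤ J := (Finset.mem_Icc.mp hj).2
      have hj1' : (1 : ℝ) ≤ (j : ℝ) := by exact_mod_cast hj1
      have hj0 : (0 : ℝ) ≤ (j : ℝ) := by positivity
      have hsplit : (j : ℝ) ^ (2 * ζ / d) =
          (j : ℝ) ^ (2 * (ζ - p) / d) * (j : ℝ) ^ (2 * p / d) := by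
        rw [← Real.rpow_add (lt_of_lt_of_le one_pos hj1')]
        ring_nf
      rw [hsplit]
      have hb : (j : ℝ) ^ (2 * (ζ - p) / d) ≤ (J : ℝ) ^ (2 * (ζ - p) / d) :=
        Real.rpow_le_rpow hj0 (by exact_mod_cast hjJ) hexp
      have hnn : 0 ≤ (a j) ^ 2 * (j : ℝ) ^ (2 * p / d) := by positivity
      calc (a j) ^ 2 * ((j : ℝ) ^ (2 * (ζ - p) / d) * (j : ℝ) ^ (2 * p / d))
          = (j : ℝ) ^ (2 * (ζ - p) / d) * ((a j) ^ 2 * (j : ℝ) ^ (2 * p / d)) := by ring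
        _ ≤ (J : ℝ) ^ (2 * (ζ - p) / d) * ((a j) ^ 2 * (j : ℝ) ^ (2 * p / d)) :=
            mul_le_mul_of_nonneg_right hb hnn
    have step2 : (J : ℝ) ^ (2 * (ζ - p) / d) *
          ∑ j ∈ Finset.Icc 1 J, (a j) ^ 2 * (j : ℝ) ^ (2 * p / d) ≤
        (J : ℝ) ^ (2 * (ζ - p) / d) * L :=
      mul_le_mul_of_nonneg_left (ha J hJ) (Real.rpow_nonneg (le_of_lt hJ0) _)
    have step3 : (J : ℝ) ^ (2 * (ζ - p) / d) ≤ (J : ℝ) ^ (2 * (ζ - p) / d + 1 / 2) :=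
      Real.rpow_le_rpow_of_exponent_le hJ1 (by linarith)
    calc ∑ j ∈ Finset.Icc 1 J, (a j) ^ 2 * (j : ℝ) ^ (2 * ζ / d)
        ≤ (J : ℝ) ^ (2 * (ζ - p) / d) * L := le_trans step step2
      _ ≤ (J : ℝ) ^ (2 * (ζ - p) / d + 1 / 2) * L :=
          mul_le_mul_of_nonneg_right step3 (le_of_lt hL)
      _ = L * (J : ℝ) ^ (2 * (ζ - p) / d + 1 / 2) := by ring
  · -- ζ < p case
    have step : ∑ j ∈ Finset.Icc 1 J, (a j) ^ 2 * (j : ℝ) ^ (2 * ζ / d) ≤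
        ∑ j ∈ Finset.Icc 1 J, (a j) ^ 2 * (j : ℝ) ^ (2 * p / d) := by
      apply Finset.sum_le_sum
      intro j hj
      have hj1 : 1 ≤ j := (Finset.mem_Icc.mp hj).1
      have hj1' : (1 : ℝ) ≤ (j : ℝ) := by exact_mod_cast hj1
      exact mul_le_mul_of_nonneg_left
        (Real.rpow_le_rpow_of_exponent_le hj1'
          (by apply div_le_div_of_nonneg_right _ hd.le; linarith))
        (sq_nonneg _)
    have hexp : 0 ≤ 2 * (ζ - p) / d + 1 / 2 := by
      have : -(d / 4) ≤ ζ - p := by linarith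
      have h2 : 2 * (ζ - p) / d ≥ 2 * (-(d / 4)) / d := by
        apply div_le_div_of_nonneg_right _ hd.le
        linarith
      have h3 : 2 * (-(d / 4)) / d = -(1 / 2) := by
        field_simp
        ring
      linarith
    have hJe : (1 : ℝ) ≤ (J : ℝ) ^ (2 * (ζ - p) / d + 1 / 2) :=
      Real.one_le_rpow hJ1 hexp
    calc ∑ j ∈ Finset.Icc 1 J, (a j) ^ 2 * (j : ℝ) ^ (2 * ζ / d)
        ≤ L := le_trans step (ha J hJ)
      _ ≤ L * (J : ℝ) ^ (2 * (ζ - p) / d + 1 / 2) := le_mul_of_one_le_right (le_of_lt hL) hJe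
end

section
/- Let p, ζ, d > 0 be real numbers and set c = (4p+d)/(2ζ). For real x define m(x) = log x − ½·log(log x) and J₀(x) = (m(x) − c·log(m(x)))^{d/ζ} (real powers). Then the ratio [x^{−2}·(log x)·J₀(x)·exp(2·J₀(x)^{ζ/d})] / (log x)^{−4p/ζ} tends to 1 as x → ∞. -/
/-!
Write `L = log x`, `M = m x` and `N = M - c log M`. Then `J₀^{ζ/d} = N` and
`exp (2N) = x² L⁻¹ M^{-2c}`, so, as `2c = d/ζ + 4p/ζ`, the ratio is exactly
`(N/M)^{d/ζ} (L/M)^{4p/ζ}`. Both bases tend to `1` because `y - a log y ~ y` as `y → ∞`.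
-/

open Filter Asymptotics Real

theorem isEquivalent_sub_mul_log_id (a : ℝ) :
    (fun y ↦ y - a * log y) ~[atTop] id :=
  IsEquivalent.refl.sub_isLittleO (isLittleO_log_id_atTop.const_mul_left a)

theorem rpow_mul_exp_div_rpow_eq {x M N a b : ℝ} (hx : 0 < x) (hL : 0 < log x) (hM : 0 < M)
    (hN : 0 < N) (hMdef : M = log x - 1 / 2 * log (log x))
    (hNdef : N = M - (a + b) / 2 * log M) :
    x ^ (-2 : ℝ) * log x * N ^ a * exp (2 * N) / log x ^ (-b) = (N / M) ^ a * (log x / M) ^ b := by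
  simp only [rpow_def_of_pos, hx, hL, hM, hN, div_pos, log_div hN.ne' hM.ne', log_div hL.ne' hM.ne']
  rw [div_eq_iff (exp_pos _).ne']
  nth_rw 2 [← exp_log hL]
  simp only [← exp_add, exp_eq_exp]
  rw [hNdef, hMdef]
  ring

theorem adaptive_rate_asymptotics_severely_illposed_general
    (p ζ d : ℝ) (hζ : 0 < ζ) (hd : 0 < d)
    (c : ℝ) (hc : c = (4 * p + d) / (2 * ζ))
    (m J₀ : ℝ → ℝ)
    (hm : ∀ x : ℝ, m x = Real.log x - (1 / 2) * Real.log (Real.log x))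
    (hJ₀ : ∀ x : ℝ, J₀ x = (m x - c * Real.log (m x)) ^ (d / ζ)) :
    Tendsto
      (fun x : ℝ =>
        (x ^ (-2 : ℝ) * Real.log x * J₀ x * Real.exp (2 * (J₀ x) ^ (ζ / d))) /
          (Real.log x) ^ (-(4 * p / ζ)))
      atTop (nhds 1) := by
  set n : ℝ → ℝ := fun x ↦ m x - c * log (m x)
  have hm_log : m ~[atTop] log :=
    ((isEquivalent_sub_mul_log_id _).comp_tendsto tendsto_log_atTop).congr_left
      (Eventually.of_forall fun x ↦ (hm x).symm)
  have hm_top : Tendsto m atTop atTop := hm_log.symm.tendsto_atTop tendsto_log_atTop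
  have hn_m : n ~[atTop] m := (isEquivalent_sub_mul_log_id c).comp_tendsto hm_top
  have hm_pos := hm_top.eventually_gt_atTop 0
  have hm_ne : ∀ᶠ x in atTop, m x ≠ 0 := hm_pos.mono fun _ h ↦ h.ne'
  have hn_div : Tendsto (fun x ↦ n x / m x) atTop (nhds 1) :=
    (isEquivalent_iff_tendsto_one hm_ne).mp hn_m
  have hlog_div : Tendsto (fun x ↦ log x / m x) atTop (nhds 1) :=
    (isEquivalent_iff_tendsto_one hm_ne).mp hm_log.symm
  have hlim := (hn_div.rpow_const (p := d / ζ) (.inl one_ne_zero)).mul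
    (hlog_div.rpow_const (p := 4 * p / ζ) (.inl one_ne_zero))
  rw [one_rpow, one_rpow, one_mul] at hlim
  refine hlim.congr' ?_
  filter_upwards [eventually_gt_atTop 0, tendsto_log_atTop.eventually_gt_atTop 0, hm_pos,
    (hn_m.symm.tendsto_atTop hm_top).eventually_gt_atTop 0] with x hx hL hM hN
  have hJ₀_rpow : J₀ x ^ (ζ / d) = n x := by
    rw [hJ₀, ← inv_div, rpow_inv_rpow hN.le (div_ne_zero hζ.ne' hd.ne')]
  have hc_sum : c = (d / ζ + 4 * p / ζ) / 2 := by rw [hc]; ring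
  rw [hJ₀_rpow, hJ₀, rpow_mul_exp_div_rpow_eq hx hL hM hN (hm x) (by rw [← hc_sum])]

/-- Rate calculation in the severely ill-posed case of Corollary 3.1: with
`m(x) = log x − ½·log log x`, `J₀(x) = (m(x) − c·log m(x))^{d/ζ}` and `c = (4p+d)/(2ζ)`,
the variance term `x^{−2}·(log x)·J₀(x)·exp(2·J₀(x)^{ζ/d})` is asymptotically equivalent
to `(log x)^{−4p/ζ}`. -/
theorem adaptive_rate_asymptotics_severely_illposed
    (p ζ d : ℝ) (hp : 0 < p) (hζ : 0 < ζ) (hd : 0 < d)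
    (c : ℝ) (hc : c = (4 * p + d) / (2 * ζ))
    (m J₀ : ℝ → ℝ)
    (hm : ∀ x : ℝ, m x = Real.log x - (1 / 2) * Real.log (Real.log x))
    (hJ₀ : ∀ x : ℝ, J₀ x = (m x - c * Real.log (m x)) ^ (d / ζ)) :
    Tendsto
      (fun x : ℝ =>
        (x ^ (-2 : ℝ) * Real.log x * J₀ x * Real.exp (2 * (J₀ x) ^ (ζ / d))) /
          (Real.log x) ^ (-(4 * p / ζ)))
      atTop (nhds 1) :=
  adaptive_rate_asymptotics_severely_illposed_general p ζ d hζ hd c hc m J₀ hm hJ₀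
end
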